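/- For every t ∈ ℝ, the Heisenberg time evolution acts on the Goldstone pair as a harmonic rotation with doubled frequency 2μ: exp(it·h_λ)·σ̂^z·exp(−it·h_λ) = cos(2μt)·σ̂^z + sin(2μt)·Jσ̂^z and exp(it·h_λ)·Jσ̂^z·exp(−it·h_λ) = −sin(2μt)·σ̂^z + cos(2μt)·Jσ̂^z. -/

import Mathlib

open Matrix

/-- Matrix exponential on 2×2 complex matrices. -/
noncomputable def mexp (A : Matrix (Fin 2) (Fin 2) ℂ) : Matrix (Fin 2) (Fin 2) ℂ :=
  NormedSpace.exp A

/-- Pauli matrix σ^z. -/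
def σz : Matrix (Fin 2) (Fin 2) ℂ := !![1, 0; 0, -1]
/-- Pauli matrix σ^+. -/
def σp : Matrix (Fin 2) (Fin 2) ℂ := !![0, 1; 0, 0]
/-- Pauli matrix σ^-. -/
def σm : Matrix (Fin 2) (Fin 2) ℂ := !![0, 0; 1, 0]

/-- μ = √(ε² + |λ|²). -/
noncomputable def μBCS (ε : ℝ) (l : ℂ) : ℝ := Real.sqrt (ε ^ 2 + ‖l‖ ^ 2)

/-- One-site effective Hamiltonian h_λ = ε·σ^z − λ·σ^+ − (conj λ)·σ^-. -/
noncomputable def hBCS (ε : ℝ) (l : ℂ) : Matrix (Fin 2) (Fin 2) ℂ :=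
  (ε : ℂ) • σz - l • σp - (starRingEnd ℂ l) • σm

/-- One-site Gibbs density matrix ρ_λ = exp(−β h_λ)/Tr exp(−β h_λ). -/
noncomputable def ρBCS (ε β : ℝ) (l : ℂ) : Matrix (Fin 2) (Fin 2) ℂ :=
  (Matrix.trace (mexp (-(β : ℂ) • hBCS ε l)))⁻¹ • mexp (-(β : ℂ) • hBCS ε l)

/-- Spectral projection P₊ = (1/2)(1 + h_λ/μ). -/
noncomputable def Pplus (ε : ℝ) (l : ℂ) : Matrix (Fin 2) (Fin 2) ℂ :=
  (1 / 2 : ℂ) • (1 + (μBCS ε l : ℂ)⁻¹ • hBCS ε l)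

/-- Spectral projection P₋ = (1/2)(1 − h_λ/μ). -/
noncomputable def Pminus (ε : ℝ) (l : ℂ) : Matrix (Fin 2) (Fin 2) ℂ :=
  (1 / 2 : ℂ) • (1 - (μBCS ε l : ℂ)⁻¹ • hBCS ε l)

/-- E₋(A) = P₋·A·P₊. -/
noncomputable def Eminus (ε : ℝ) (l : ℂ) (A : Matrix (Fin 2) (Fin 2) ℂ) :
    Matrix (Fin 2) (Fin 2) ℂ := Pminus ε l * A * Pplus ε l

/-- E₀(A) = P₋·A·P₋ + P₊·A·P₊. -/
noncomputable def Ezero (ε : ℝ) (l : ℂ) (A : Matrix (Fin 2) (Fin 2) ℂ) :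
    Matrix (Fin 2) (Fin 2) ℂ := Pminus ε l * A * Pminus ε l + Pplus ε l * A * Pplus ε l

/-- E₊(A) = P₊·A·P₋. -/
noncomputable def Eplus (ε : ℝ) (l : ℂ) (A : Matrix (Fin 2) (Fin 2) ℂ) :
    Matrix (Fin 2) (Fin 2) ℂ := Pplus ε l * A * Pminus ε l

/-- The complex structure map J(A) = i·(E₊(A) − E₋(A)). -/
noncomputable def Jmap (ε : ℝ) (l : ℂ) (A : Matrix (Fin 2) (Fin 2) ℂ) :
    Matrix (Fin 2) (Fin 2) ℂ := Complex.I • (Eplus ε l A - Eminus ε l A)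

/-- Reduced symmetry generator σ̂^z = (E₊ + E₋)(σ^z). -/
noncomputable def σhat (ε : ℝ) (l : ℂ) : Matrix (Fin 2) (Fin 2) ℂ :=
  Eplus ε l σz + Eminus ε l σz

/-- Canonical order parameter Jσ̂^z = i·(E₊ − E₋)(σ^z). -/
noncomputable def Jσhat (ε : ℝ) (l : ℂ) : Matrix (Fin 2) (Fin 2) ℂ :=
  Jmap ε l σz

/-!
Since `h_λ² = μ²`, the matrix `P₊` is an idempotent with `P₋ = 1 - P₊` and `h_λ = μ (P₊ - P₋)`,
so `exp(i t h_λ) = e^{iμt} P₊ + e^{-iμt} P₋`. Conjugating by it multiplies the off-diagonal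
Peirce corners `E₊(A) = P₊ A P₋` and `E₋(A) = P₋ A P₊` by `e^{2iμt}` and `e^{-2iμt}`; as
`σ̂^z = E₊(σ^z) + E₋(σ^z)` and `Jσ̂^z = i (E₊(σ^z) - E₋(σ^z))`, this is a rotation of the pair
by the angle `2μt`.
-/

open NormedSpace

section Idempotent

variable {R A : Type*} [CommSemiring R] [Ring A] [Algebra R A] {P : A}

theorem IsIdempotentElem.smul_add_smul_one_sub_pow (hP : IsIdempotentElem P) (a b : R) (n : ℕ) :
    (a • P + b • (1 - P)) ^ n = a ^ n • P + b ^ n • (1 - P) := by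
  induction n with
  | zero => simp
  | succ n ih =>
    rw [pow_succ, ih]
    simp only [add_mul, mul_add, smul_mul_smul_comm, hP.eq, hP.one_sub.eq, hP.mul_one_sub_self,
      hP.one_sub_mul_self, smul_zero, add_zero, zero_add, pow_succ]

theorem IsIdempotentElem.smul_add_smul_one_sub_mul_corner_mul (hP : IsIdempotentElem P)
    (a b c d : R) (x : A) :
    (a • P + b • (1 - P)) * (P * x * (1 - P)) * (c • P + d • (1 - P)) =
      (a * d) • (P * x * (1 - P)) := by
  simp only [add_mul, mul_add, smul_mul_assoc, mul_smul_comm, ← mul_assoc, hP.eq,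
    hP.one_sub_mul_self, zero_mul]
  simp only [mul_assoc, hP.one_sub.eq, hP.one_sub_mul_self, mul_zero, smul_zero, zero_add,
    add_zero, smul_smul]
  rw [mul_comm]

theorem IsIdempotentElem.smul_add_smul_one_sub_mul_corner_mul' (hP : IsIdempotentElem P)
    (a b c d : R) (x : A) :
    (a • P + b • (1 - P)) * ((1 - P) * x * P) * (c • P + d • (1 - P)) =
      (b * c) • ((1 - P) * x * P) := by
  have := hP.one_sub.smul_add_smul_one_sub_mul_corner_mul b a d c x
  rwa [sub_sub_cancel, add_comm (b • _), add_comm (d • _)] at this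

end Idempotent

theorem IsIdempotentElem.exp_smul_add_smul_one_sub {𝕂 𝔸 : Type*} [RCLike 𝕂] [Ring 𝔸]
    [Algebra 𝕂 𝔸] [TopologicalSpace 𝔸] [IsTopologicalRing 𝔸] [ContinuousSMul 𝕂 𝔸] [T2Space 𝔸]
    {P : 𝔸} (hP : IsIdempotentElem P) (a b : 𝕂) :
    exp (a • P + b • (1 - P)) = exp a • P + exp b • (1 - P) := by
  have ha := (expSeries_summable' (𝕂 := 𝕂) a).smul_const P
  have hb := (expSeries_summable' (𝕂 := 𝕂) b).smul_const (1 - P)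
  simp only [exp_eq_tsum 𝕂, hP.smul_add_smul_one_sub_pow, smul_add, smul_smul, ← smul_eq_mul]
  rw [ha.tsum_add hb, (expSeries_summable' a).tsum_smul_const,
    (expSeries_summable' b).tsum_smul_const]

theorem isIdempotentElem_half_smul_one_add {𝕜 A : Type*} [Field 𝕜] [NeZero (2 : 𝕜)] [Ring A]
    [Algebra 𝕜 A] {k : A} (hk : k * k = 1) : IsIdempotentElem ((1 / 2 : 𝕜) • (1 + k)) := by
  have hsq : (1 + k) * (1 + k) = (2 : 𝕜) • (1 + k) := by
    simp only [add_mul, mul_add, one_mul, mul_one, hk, two_smul]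
    abel
  rw [IsIdempotentElem, smul_mul_smul_comm, hsq, smul_smul]
  congr 1
  field_simp

open Complex

theorem μBCS_pos {ε : ℝ} (hε : ε ≠ 0) (l : ℂ) : 0 < μBCS ε l :=
  Real.sqrt_pos.mpr (by positivity)

theorem hBCS_mul_self (ε : ℝ) (l : ℂ) :
    hBCS ε l * hBCS ε l = ((μBCS ε l : ℂ) ^ 2) • 1 := by
  have hμ : (μBCS ε l : ℂ) ^ 2 = (ε : ℂ) ^ 2 + l * starRingEnd ℂ l := by
    rw [μBCS, ← ofReal_pow, Real.sq_sqrt (by positivity), mul_conj']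
    push_cast
    rfl
  rw [hμ]
  ext i j
  fin_cases i <;> fin_cases j <;>
    simp [hBCS, σz, σp, σm, Matrix.mul_apply, Fin.sum_univ_two] <;> ring

theorem Pminus_eq_one_sub_Pplus (ε : ℝ) (l : ℂ) : Pminus ε l = 1 - Pplus ε l := by
  rw [Pminus, Pplus]
  module

theorem isIdempotentElem_Pplus {ε : ℝ} (hε : ε ≠ 0) (l : ℂ) : IsIdempotentElem (Pplus ε l) := by
  have hμ : (μBCS ε l : ℂ) ≠ 0 := ofReal_ne_zero.mpr (μBCS_pos hε l).ne'
  refine isIdempotentElem_half_smul_one_add ?_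
  rw [smul_mul_smul_comm, hBCS_mul_self, smul_smul]
  field_simp
  simp

theorem smul_hBCS_eq {ε : ℝ} (hε : ε ≠ 0) (l : ℂ) (s : ℂ) :
    s • hBCS ε l = (s * μBCS ε l) • Pplus ε l + (-(s * μBCS ε l)) • (1 - Pplus ε l) := by
  have hμ : (μBCS ε l : ℂ) ≠ 0 := ofReal_ne_zero.mpr (μBCS_pos hε l).ne'
  rw [Pplus]
  match_scalars <;> field_simp <;> ring

theorem mexp_smul_hBCS {ε : ℝ} (hε : ε ≠ 0) (l : ℂ) (s : ℂ) :
    mexp (s • hBCS ε l) =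
      Complex.exp (s * μBCS ε l) • Pplus ε l + Complex.exp (-(s * μBCS ε l)) • (1 - Pplus ε l) := by
  rw [mexp, smul_hBCS_eq hε, (isIdempotentElem_Pplus hε l).exp_smul_add_smul_one_sub,
    Complex.exp_eq_exp_ℂ]

theorem mexp_mul_Eplus_mul_mexp {ε : ℝ} (hε : ε ≠ 0) (l : ℂ) (t : ℝ)
    (A : Matrix (Fin 2) (Fin 2) ℂ) :
    mexp ((I * t) • hBCS ε l) * Eplus ε l A * mexp ((-(I * t)) • hBCS ε l) =
      (Real.cos (2 * μBCS ε l * t) + Real.sin (2 * μBCS ε l * t) * I : ℂ) • Eplus ε l A := by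
  rw [mexp_smul_hBCS hε, mexp_smul_hBCS hε, Eplus, Pminus_eq_one_sub_Pplus,
    (isIdempotentElem_Pplus hε l).smul_add_smul_one_sub_mul_corner_mul, ← Complex.exp_add,
    show I * t * μBCS ε l + -(-(I * t) * μBCS ε l) = (2 * μBCS ε l * t : ℝ) * I by push_cast; ring,
    exp_mul_I, ofReal_cos, ofReal_sin]

theorem mexp_mul_Eminus_mul_mexp {ε : ℝ} (hε : ε ≠ 0) (l : ℂ) (t : ℝ)
    (A : Matrix (Fin 2) (Fin 2) ℂ) :
    mexp ((I * t) • hBCS ε l) * Eminus ε l A * mexp ((-(I * t)) • hBCS ε l) =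
      (Real.cos (2 * μBCS ε l * t) - Real.sin (2 * μBCS ε l * t) * I : ℂ) • Eminus ε l A := by
  rw [mexp_smul_hBCS hε, mexp_smul_hBCS hε, Eminus, Pminus_eq_one_sub_Pplus,
    (isIdempotentElem_Pplus hε l).smul_add_smul_one_sub_mul_corner_mul', ← Complex.exp_add,
    show -(I * t * μBCS ε l) + -(I * t) * μBCS ε l = (-(2 * μBCS ε l * t) : ℝ) * I by
      push_cast; ring,
    exp_mul_I, ofReal_neg, Complex.cos_neg, Complex.sin_neg, ofReal_cos, ofReal_sin, neg_mul,
    ← sub_eq_add_neg]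

theorem add_mul_I_smul_add_sub_mul_I_smul {M : Type*} [AddCommGroup M] [Module ℂ M]
    (c s : ℂ) (x y : M) :
    (c + s * I) • x + (c - s * I) • y = c • (x + y) + s • (I • (x - y)) := by
  module

theorem I_smul_add_mul_I_smul_sub_sub_mul_I_smul {M : Type*} [AddCommGroup M] [Module ℂ M]
    (c s : ℂ) (x y : M) :
    I • ((c + s * I) • x - (c - s * I) • y) = (-s) • (x + y) + c • (I • (x - y)) := by
  match_scalars <;> linear_combination s * I_sq

/-- the Heisenberg time evolution acts on the Goldstone pair as a harmonic
rotation with doubled frequency 2μ: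
exp(ith_λ)·σ̂^z·exp(−ith_λ) = cos(2μt)·σ̂^z + sin(2μt)·Jσ̂^z and
exp(ith_λ)·Jσ̂^z·exp(−ith_λ) = −sin(2μt)·σ̂^z + cos(2μt)·Jσ̂^z. -/
theorem bcs_heisenberg_evolution_of_goldstone_pair
    (ε : ℝ) (hε : ε ∈ Set.Ioo (0 : ℝ) (1 / 2)) (l : ℂ) (t : ℝ) :
    mexp ((Complex.I * t) • hBCS ε l) * σhat ε l * mexp ((-(Complex.I * t)) • hBCS ε l) =
      ((Real.cos (2 * μBCS ε l * t) : ℂ)) • σhat ε l +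
        ((Real.sin (2 * μBCS ε l * t) : ℂ)) • Jσhat ε l ∧
    mexp ((Complex.I * t) • hBCS ε l) * Jσhat ε l * mexp ((-(Complex.I * t)) • hBCS ε l) =
      (-(Real.sin (2 * μBCS ε l * t) : ℂ)) • σhat ε l +
        ((Real.cos (2 * μBCS ε l * t) : ℂ)) • Jσhat ε l := by
  have hε₀ : ε ≠ 0 := hε.1.ne'
  simp only [σhat, Jσhat, Jmap, mul_add, add_mul, mul_sub, sub_mul, mul_smul_comm, smul_mul_assoc,
    mexp_mul_Eplus_mul_mexp hε₀, mexp_mul_Eminus_mul_mexp hε₀]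
  exact ⟨add_mul_I_smul_add_sub_mul_I_smul _ _ _ _,
    I_smul_add_mul_I_smul_sub_sub_mul_I_smul _ _ _ _⟩
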